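/- arXiv:1406.7655 — 3 statements merged into one kernel-verified Lean document; each statement's English description precedes it below -/
import Mathlib

section
/- Let (w₀,w) ∈ Γ with w₀(s) > 0 for a.e. s and ∫₀^∞ w₀^q(s) ds = +∞. Define t(s) = ∫₀^s w₀^q(σ) dσ and let s(·) : [0,∞) → [0,∞) be the (continuous) inverse function of t(·). Then α(t) := w(s(t)) / w₀(s(t)) belongs to 𝒜 (it is Borel-measurable with values in A and |α|^q locally integrable), and for every x ∈ ℝⁿ the trajectory satisfies y_x(t,α) = ξ_x(s(t),w₀,w) for all t ≥ 0. -/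
open MeasureTheory Filter Topology Set RealInnerProductSpace
open scoped ENNReal NNReal

noncomputable section

/-- State space `ℝⁿ` with the Euclidean norm. -/
abbrev XX (n : ℕ) := EuclideanSpace ℝ (Fin n)
/-- Control space `ℝᵐ` with the Euclidean norm. -/
abbrev UU (m : ℕ) := EuclideanSpace ℝ (Fin m)

/-- A modulus of continuity `ω(r,R)` (second argument is a radius parameter):
`ω(·,R)` is increasing near `0`, continuous at `0`, vanishes at `0`, and `ω(r,·)` is increasing. -/
structure IsModulus (om : ℝ → ℝ → ℝ) : Prop where
  zero : ∀ R > (0:ℝ), om 0 R = 0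
  cont : ∀ R > (0:ℝ), ContinuousWithinAt (fun r => om r R) (Ici 0) 0
  mono : ∀ R > (0:ℝ), ∃ ε > (0:ℝ), MonotoneOn (fun r => om r R) (Icc 0 ε)
  monoR : ∀ r : ℝ, Monotone (fun R => om r R)

/-- `expNegE v = e^{-v}` for `v ∈ [0,∞]`. -/
def expNegE (v : ℝ≥0∞) : ℝ := if v = ⊤ then 0 else Real.exp (-v.toReal)

/-- All the data of the optimal control problem: the control set `A`, dynamics `f`,
Lagrangian `l`, exponents `p,q`, recession functions `fInf = f^∞`, `lInf = l^∞`,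
the constants and moduli appearing in (H0)–(H1), and the solution maps `traj`
(of the ordinary system), `etraj` (of the extended system) and `rtraj` (of the relaxed
extended system); the defining properties of the solution maps are the specifications
`TrajSpec`, `ETrajSpec`, `RTrajSpec` below. -/
structure Sys (n m : ℕ) where
  A : Set (UU m)
  f : XX n → UU m → XX n
  l : XX n → UU m → ℝ
  p : ℕ
  q : ℕ
  fInf : XX n → UU m → XX n
  lInf : XX n → UU m → ℝ
  M : ℝ
  L : ℝ → ℝ
  MR : ℝ → ℝ
  om : ℝ → ℝ → ℝ
  C₁ : ℝ
  C₂ : ℝ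
  traj : XX n → (ℝ → UU m) → ℝ → XX n
  etraj : XX n → (ℝ → ℝ) → (ℝ → UU m) → ℝ → XX n
  rtraj : XX n → (ℝ → Measure (UU m)) → ℝ → XX n

namespace Sys

variable {n m : ℕ} (S : Sys n m)

/-- `A` is a closed convex unbounded cone containing the origin. -/
def ACone : Prop :=
  IsClosed S.A ∧ Convex ℝ S.A ∧ (∀ c : ℝ, 0 ≤ c → ∀ a ∈ S.A, c • a ∈ S.A) ∧
    (0 : UU m) ∈ S.A ∧ ¬ Bornology.IsBounded S.A

/-- Hypothesis (H0). -/
def H0 : Prop :=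
  1 ≤ S.p ∧ S.p ≤ S.q ∧
  ContinuousOn (fun z : XX n × UU m => S.f z.1 z.2) (univ ×ˢ S.A) ∧
  ContinuousOn (fun z : XX n × UU m => S.l z.1 z.2) (univ ×ˢ S.A) ∧
  0 < S.M ∧ IsModulus S.om ∧
  (∀ R > (0:ℝ), 0 < S.L R ∧ 0 < S.MR R) ∧
  (∀ R > (0:ℝ), ∀ a ∈ S.A, ∀ x x₁ x₂ : XX n, ‖x‖ ≤ R → ‖x₁‖ ≤ R → ‖x₂‖ ≤ R →
    ‖S.f x₁ a - S.f x₂ a‖ ≤ S.L R * (1 + ‖a‖ ^ S.p) * ‖x₁ - x₂‖ ∧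
    |S.l x₁ a - S.l x₂ a| ≤ (1 + ‖a‖ ^ S.q) * S.om ‖x₁ - x₂‖ R ∧
    0 ≤ S.l x a ∧ S.l x a ≤ S.MR R * (1 + ‖a‖ ^ S.q)) ∧
  (∀ (x : XX n), ∀ a ∈ S.A, ‖S.f x a‖ ≤ S.M * (1 + ‖a‖ ^ S.p) * (1 + ‖x‖))

/-- Hypothesis (H1): (weak) coercivity of `l` and existence of the (continuous) recession
functions `f^∞`, `l^∞`, with uniform convergence on compact subsets of `ℝⁿ × A`. -/
def H1 : Prop :=
  0 ≤ S.C₁ ∧ 0 < S.C₂ ∧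
  (∀ (x : XX n), ∀ a ∈ S.A, S.C₂ * ‖a‖ ^ S.q - S.C₁ ≤ S.l x a) ∧
  ContinuousOn (fun z : XX n × UU m => S.fInf z.1 z.2) (univ ×ˢ S.A) ∧
  ContinuousOn (fun z : XX n × UU m => S.lInf z.1 z.2) (univ ×ˢ S.A) ∧
  (∀ K : Set (XX n × UU m), IsCompact K → K ⊆ univ ×ˢ S.A →
    TendstoUniformlyOn (fun (ρ : ℝ) (z : XX n × UU m) => (ρ ^ S.q) • S.f z.1 (ρ⁻¹ • z.2))
      (fun z => S.fInf z.1 z.2) (𝓝[>] (0:ℝ)) K ∧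
    TendstoUniformlyOn (fun (ρ : ℝ) (z : XX n × UU m) => (ρ ^ S.q) * S.l z.1 (ρ⁻¹ • z.2))
      (fun z => S.lInf z.1 z.2) (𝓝[>] (0:ℝ)) K)

/-- The set `𝒜` of admissible (ordinary) controls: Borel measurable, `A`-valued,
with `|α|^q` locally integrable. -/
def Admissible (α : ℝ → UU m) : Prop :=
  Measurable α ∧ (∀ t, α t ∈ S.A) ∧
  ∀ T : ℝ, 0 < T → IntegrableOn (fun t => ‖α t‖ ^ S.q) (Ioc 0 T)

/-- `g` is the (locally absolutely continuous) solution on `[0,∞)` of `g' = v`, `g 0 = x`,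
expressed in integral form. -/
def SolvesODE (g : ℝ → XX n) (x : XX n) (v : ℝ → XX n) : Prop :=
  ContinuousOn g (Ici 0) ∧ g 0 = x ∧
  ∀ t ≥ (0:ℝ), g t = x + ∫ τ in (0:ℝ)..t, v τ

/-- Specification of the solution map of the ordinary control system:
`traj x α` is the unique solution of `ẏ = f(y,α)`, `y(0) = x`. -/
def TrajSpec : Prop :=
  ∀ (x : XX n) (α : ℝ → UU m), S.Admissible α →
    SolvesODE (S.traj x α) x (fun t => S.f (S.traj x α t) (α t)) ∧
    ∀ g : ℝ → XX n, SolvesODE g x (fun t => S.f (g t) (α t)) →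
      ∀ t ≥ (0:ℝ), g t = S.traj x α t

/-- The compact control set `S(A)` of the extended problem. -/
def SAset : Set (ℝ × UU m) :=
  {z | 0 ≤ z.1 ∧ z.2 ∈ S.A ∧ z.1 ^ S.q + ‖z.2‖ ^ S.q = 1}

/-- The extended dynamics `f̄`. -/
def fbar (x : XX n) (w₀ : ℝ) (w : UU m) : XX n :=
  if w₀ = 0 then S.fInf x w else (w₀ ^ S.q) • S.f x (w₀⁻¹ • w)

/-- The extended Lagrangian `l̄`. -/
def lbar (x : XX n) (w₀ : ℝ) (w : UU m) : ℝ :=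
  if w₀ = 0 then S.lInf x w else (w₀ ^ S.q) * S.l x (w₀⁻¹ • w)

/-- The set `Γ` of extended controls. -/
def EAdmissible (w₀ : ℝ → ℝ) (w : ℝ → UU m) : Prop :=
  Measurable w₀ ∧ Measurable w ∧ ∀ s, (w₀ s, w s) ∈ S.SAset

/-- Specification of the solution map of the extended control system. -/
def ETrajSpec : Prop :=
  ∀ (x : XX n) (w₀ : ℝ → ℝ) (w : ℝ → UU m), S.EAdmissible w₀ w →
    SolvesODE (S.etraj x w₀ w) x (fun s => S.fbar (S.etraj x w₀ w s) (w₀ s) (w s)) ∧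
    ∀ g : ℝ → XX n, SolvesODE g x (fun s => S.fbar (g s) (w₀ s) (w s)) →
      ∀ s ≥ (0:ℝ), g s = S.etraj x w₀ w s

/-- The compact set `K_A = {w ∈ A : |w| ≤ 1}`. -/
def KA : Set (UU m) := {w | w ∈ S.A ∧ ‖w‖ ≤ 1}

/-- `w₀(w) = (1-|w|^q)^{1/q}`. -/
def w0of (w : UU m) : ℝ := (1 - ‖w‖ ^ S.q) ^ ((S.q : ℝ)⁻¹)

/-- The relaxed extended dynamics `f̄^r(x,μ) = ∫ f̄(x,(1-|w|^q)^{1/q},w) dμ(w)`. -/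
def fbarr (x : XX n) (μ : Measure (UU m)) : XX n := ∫ w, S.fbar x (S.w0of w) w ∂μ

/-- The relaxed extended Lagrangian `l̄^r(x,μ) = ∫ l̄(x,(1-|w|^q)^{1/q},w) dμ(w)`. -/
def lbarr (x : XX n) (μ : Measure (UU m)) : ℝ := ∫ w, S.lbar x (S.w0of w) w ∂μ

/-- The set `Γ^r` of relaxed extended controls: measurable families of probability
measures supported in `K_A`. -/
def RAdmissible (μ : ℝ → Measure (UU m)) : Prop :=
  (∀ s, IsProbabilityMeasure (μ s)) ∧ (∀ s, (μ s) S.KAᶜ = 0) ∧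
  ∀ g : UU m → ℝ, Continuous g → Measurable (fun s => ∫ w, g w ∂(μ s))

/-- Specification of the solution map of the relaxed extended control system. -/
def RTrajSpec : Prop :=
  ∀ (x : XX n) (μ : ℝ → Measure (UU m)), S.RAdmissible μ →
    SolvesODE (S.rtraj x μ) x (fun s => S.fbarr (S.rtraj x μ s) (μ s)) ∧
    ∀ g : ℝ → XX n, SolvesODE g x (fun s => S.fbarr (g s) (μ s)) →
      ∀ s ≥ (0:ℝ), g s = S.rtraj x μ s

/-- The basic standing assumptions: `A` is a closed convex unbounded cone containing `0`,
(H0), (H1) hold, and the three solution maps satisfy their specifications. -/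
def Setup : Prop :=
  S.ACone ∧ S.H0 ∧ S.H1 ∧ S.TrajSpec ∧ S.ETrajSpec ∧ S.RTrajSpec

/-! ### Payoffs and value functions -/

/-- Finite-horizon payoff `𝒥(t,x,α)` (in `[0,∞]`). -/
def finCost (t : ℝ) (x : XX n) (α : ℝ → UU m) : ℝ≥0∞ :=
  ∫⁻ τ in Ioc (0:ℝ) t, ENNReal.ofReal (S.l (S.traj x α τ) (α τ))

/-- Infinite-horizon payoff `𝒥(+∞,x,α)`. -/
def infCost (x : XX n) (α : ℝ → UU m) : ℝ≥0∞ :=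
  ∫⁻ τ in Ioi (0:ℝ), ENNReal.ofReal (S.l (S.traj x α τ) (α τ))

/-- The finite-horizon value function `𝒱(t,x)`. -/
def finVal (t : ℝ) (x : XX n) : ℝ≥0∞ :=
  sInf {c | ∃ α, S.Admissible α ∧ c = S.finCost t x α}

/-- The infinite-horizon value function `𝒱(x)`. -/
def infVal (x : XX n) : ℝ≥0∞ :=
  sInf {c | ∃ α, S.Admissible α ∧ c = S.infCost x α}

/-- `Σ(x) = lim_{t→∞} 𝒱(t,x) = sup_{t>0} 𝒱(t,x)`. -/
def SigmaFn (x : XX n) : ℝ≥0∞ := ⨆ t : ℝ, ⨆ _ : 0 < t, S.finVal t x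

/-- Extended payoff `J(S,x,w₀,w)`. -/
def eCost (Sf : ℝ) (x : XX n) (w₀ : ℝ → ℝ) (w : ℝ → UU m) : ℝ≥0∞ :=
  ∫⁻ s in Ioc (0:ℝ) Sf, ENNReal.ofReal (S.lbar (S.etraj x w₀ w s) (w₀ s) (w s))

/-- Extended infinite-horizon payoff `J(+∞,x,w₀,w)`. -/
def eInfCost (x : XX n) (w₀ : ℝ → ℝ) (w : ℝ → UU m) : ℝ≥0∞ :=
  ∫⁻ s in Ioi (0:ℝ), ENNReal.ofReal (S.lbar (S.etraj x w₀ w s) (w₀ s) (w s))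

/-- The extended finite-horizon value function `V(t,x)`. -/
def eFinVal (t : ℝ) (x : XX n) : ℝ≥0∞ :=
  sInf {c | ∃ w₀ w Sf, S.EAdmissible w₀ w ∧ 0 < Sf ∧
    (∫ s in Ioc (0:ℝ) Sf, (w₀ s) ^ S.q) = t ∧ c = S.eCost Sf x w₀ w}

/-- The extended infinite-horizon value function `V(x)`. -/
def eInfVal (x : XX n) : ℝ≥0∞ :=
  sInf {c | ∃ w₀ w, S.EAdmissible w₀ w ∧ c = S.eInfCost x w₀ w}

/-- Relaxed extended payoff `J^r(S,x,μ)`. -/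
def rCost (Sf : ℝ) (x : XX n) (μ : ℝ → Measure (UU m)) : ℝ≥0∞ :=
  ∫⁻ s in Ioc (0:ℝ) Sf, ENNReal.ofReal (S.lbarr (S.rtraj x μ s) (μ s))

/-- Relaxed extended infinite-horizon payoff `J^r(+∞,x,μ)`. -/
def rInfCost (x : XX n) (μ : ℝ → Measure (UU m)) : ℝ≥0∞ :=
  ∫⁻ s in Ioi (0:ℝ), ENNReal.ofReal (S.lbarr (S.rtraj x μ s) (μ s))

/-- The relaxed finite-horizon value function `V^r(t,x)`. -/
def rFinVal (t : ℝ) (x : XX n) : ℝ≥0∞ :=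
  sInf {c | ∃ μ Sf, S.RAdmissible μ ∧ 0 < Sf ∧
    (∫ s in Ioc (0:ℝ) Sf, (1 - ∫ w, ‖w‖ ^ S.q ∂(μ s))) = t ∧ c = S.rCost Sf x μ}

/-- The relaxed infinite-horizon value function `V^r(x)`. -/
def rInfVal (x : XX n) : ℝ≥0∞ :=
  sInf {c | ∃ μ, S.RAdmissible μ ∧ c = S.rInfCost x μ}

/-- The unconstrained relaxed value `W(s,x)` over the parameter interval `[0,s]`. -/
def WVal (s : ℝ) (x : XX n) : ℝ≥0∞ :=
  sInf {c | ∃ μ, S.RAdmissible μ ∧ c = S.rCost s x μ}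

/-- Discounted payoff. -/
def discCost (δ : ℝ) (x : XX n) (α : ℝ → UU m) : ℝ≥0∞ :=
  ∫⁻ τ in Ioi (0:ℝ), ENNReal.ofReal (Real.exp (-(δ * τ)) * S.l (S.traj x α τ) (α τ))

/-- The discounted infinite-horizon value function `𝒱_δ(x)`. -/
def discVal (δ : ℝ) (x : XX n) : ℝ≥0∞ :=
  sInf {c | ∃ α, S.Admissible α ∧ c = S.discCost δ x α}

/-! ### Further hypotheses -/

/-- Hypothesis (H2). -/
def H2 (T : Set (XX n)) : Prop :=
  T.Nonempty ∧ IsClosed T ∧ IsCompact (frontier T) ∧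
  (∀ x ∈ T, S.infVal x = 0) ∧
  ∀ xb ∈ frontier T, Tendsto S.infVal (𝓝 xb) (𝓝 0)

/-- Hypothesis (H3). -/
def H3 (T : Set (XX n)) : Prop :=
  ∀ x : XX n, S.eInfVal x < ⊤ → ∃ ε : ℝ, 0 < ε ∧
    ∀ w₀ w, S.EAdmissible w₀ w →
      S.eInfCost x w₀ w ≤ S.eInfVal x + ENNReal.ofReal ε →
      Filter.liminf (fun s => Metric.infDist (S.etraj x w₀ w s) T) atTop = 0

/-- Hypothesis (CV)'. -/
def CVp : Prop :=
  ∀ x : XX n, Convex ℝ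
    {v : ℝ × XX n × ℝ | ∃ w₀ ∈ Icc (0:ℝ) 1, ∃ w ∈ S.KA,
      v.1 = w₀ ^ S.q ∧ v.2.1 = S.fbar x w₀ w ∧ S.lbar x w₀ w ≤ v.2.2}

/-- Hypothesis (H0)₁: the constants and modulus in (H0) are independent of `R`,
`|f(x,a)| ≤ M(1+|a|^p)`, and `∫₀¹ ω(s)/s ds < ∞`. -/
def H01 : Prop :=
  (∀ R R' : ℝ, 0 < R → 0 < R' →
    S.L R = S.L R' ∧ S.MR R = S.MR R' ∧ ∀ r, S.om r R = S.om r R') ∧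
  (∀ (x : XX n), ∀ a ∈ S.A, ‖S.f x a‖ ≤ S.M * (1 + ‖a‖ ^ S.p)) ∧
  IntegrableOn (fun s => S.om s 1 / s) (Ioc (0:ℝ) 1)

/-- Hypothesis (H0)₂: optimal relaxed trajectories are bounded, and a Dini-type
condition on the modulus of `l`. -/
def H02 : Prop :=
  ∀ x : XX n, S.rInfVal x < ⊤ →
    ∃ μ, S.RAdmissible μ ∧ S.rInfCost x μ = S.rInfVal x ∧
      ∃ Rb : ℝ, 0 < Rb ∧ (∀ s ≥ (0:ℝ), ‖S.rtraj x μ s‖ ≤ Rb) ∧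
        IntegrableOn (fun s => S.om s (Rb + 3) / s) (Ioc (0:ℝ) 1)

/-- The lower semicontinuous envelope `u_*(x) = (liminf_{z→x} u(z)) ∧ u(x)`. -/
def lscEnv (u : XX n → ℝ≥0∞) (x : XX n) : ℝ≥0∞ :=
  min (Filter.liminf u (𝓝[≠] x)) (u x)

/-! ### Hamiltonians and viscosity notions -/

/-- The extended Hamiltonian `H(x,p) = max_{(w₀,w)∈S(A)} {-⟨f̄(x,w₀,w),p⟩ - l̄(x,w₀,w)}`. -/
def ham (x pv : XX n) : ℝ :=
  sSup {r : ℝ | ∃ w₀ w, (w₀, w) ∈ S.SAset ∧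
    r = -(inner ℝ (S.fbar x w₀ w) pv : ℝ) - S.lbar x w₀ w}

/-- The Kruzkov-transformed Hamiltonian `K(x,r,p)`. -/
def kru (x : XX n) (u : ℝ) (pv : XX n) : ℝ :=
  sSup {r : ℝ | ∃ w₀ w, (w₀, w) ∈ S.SAset ∧
    r = -(inner ℝ (S.fbar x w₀ w) pv : ℝ) - S.lbar x w₀ w + S.lbar x w₀ w * u}

/-- The effective Hamiltonian `H̃_λ(x,p)`. -/
def hamTilde (lam : ℝ) (x pv : XX n) : ℝ :=
  sSup {r : ℝ | ∃ w₀ w, (w₀, w) ∈ S.SAset ∧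
    r = -(inner ℝ (S.fbar x w₀ w) pv : ℝ) - S.lbar x w₀ w + lam * w₀ ^ S.q}

/-- `u : ℝⁿ → [0,∞]` is a viscosity supersolution of `H(x,Du) = 0` at every point of `ℝⁿ`:
at each `x₀` either `u_*(x₀) = +∞`, or for every `C¹` test function `φ` such that `u_* - φ`
has a local minimum at `x₀` one has `H(x₀,Dφ(x₀)) ≥ 0`. -/
def IsSupersolH (u : XX n → ℝ≥0∞) : Prop :=
  ∀ x₀ : XX n, lscEnv u x₀ = ⊤ ∨
    ∀ φ : XX n → ℝ, ContDiff ℝ 1 φ →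
      (∀ᶠ x in 𝓝 x₀,
        (lscEnv u x₀ : EReal) - ((φ x₀ : ℝ) : EReal) ≤ (lscEnv u x : EReal) - ((φ x : ℝ) : EReal)) →
      0 ≤ S.ham x₀ (gradient φ x₀)

/-- Lower semicontinuous envelope of a real-valued function. -/
def lscEnvR (u : XX n → ℝ) (x : XX n) : ℝ := Filter.liminf u (𝓝 x)

/-- Upper semicontinuous envelope of a real-valued function. -/
def uscEnvR (u : XX n → ℝ) (x : XX n) : ℝ := Filter.limsup u (𝓝 x)

/-- Viscosity supersolution of `K(x,u,Du) = 0` at `x₀`. -/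
def KruSupersolAt (u : XX n → ℝ) (x₀ : XX n) : Prop :=
  ∀ φ : XX n → ℝ, ContDiff ℝ 1 φ →
    IsLocalMin (fun x => lscEnvR u x - φ x) x₀ →
    0 ≤ S.kru x₀ (lscEnvR u x₀) (gradient φ x₀)

/-- Viscosity subsolution of `K(x,u,Du) = 0` at `x₀`. -/
def KruSubsolAt (u : XX n → ℝ) (x₀ : XX n) : Prop :=
  ∀ φ : XX n → ℝ, ContDiff ℝ 1 φ →
    IsLocalMax (fun x => uscEnvR u x - φ x) x₀ →
    S.kru x₀ (uscEnvR u x₀) (gradient φ x₀) ≤ 0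

/-- Viscosity solution of `K(x,u,Du) = 0` on a set `Ω`. -/
def KruSolOn (u : XX n → ℝ) (Ω : Set (XX n)) : Prop :=
  ∀ x ∈ Ω, S.KruSupersolAt u x ∧ S.KruSubsolAt u x

/-- `u` (continuous) is a viscosity solution of `G(x,Du) = 0` in `ℝⁿ`. -/
def IsViscSol (G : XX n → XX n → ℝ) (u : XX n → ℝ) : Prop :=
  ∀ x₀ : XX n,
    (∀ φ : XX n → ℝ, ContDiff ℝ 1 φ →
      IsLocalMin (fun x => u x - φ x) x₀ → 0 ≤ G x₀ (gradient φ x₀)) ∧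
    (∀ φ : XX n → ℝ, ContDiff ℝ 1 φ →
      IsLocalMax (fun x => u x - φ x) x₀ → G x₀ (gradient φ x₀) ≤ 0)

/-! ### Periodic setting -/

/-- The distance on the torus `ℝⁿ/(∏ Tᵢ ℤ)`. -/
def torusDist (T : Fin n → ℝ) (x z : XX n) : ℝ :=
  sInf {d : ℝ | ∃ k : Fin n → ℤ,
    d = ‖x - z - ∑ i, ((k i : ℝ) • EuclideanSpace.single i (T i))‖}

/-- Hypothesis (H4): periodic data with global Lipschitz/growth constants `L`, `M`,
and complete controllability of the relaxed extended system with constants `C`, `γ`. -/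
def H4 (T : Fin n → ℝ) (L M C γ : ℝ) : Prop :=
  (∀ i, 0 < T i) ∧ 0 < L ∧ 0 < M ∧ 0 < C ∧ 0 < γ ∧
  (∀ i : Fin n, ∀ (x : XX n), ∀ a ∈ S.A,
    S.f (x + EuclideanSpace.single i (T i)) a = S.f x a ∧
    S.l (x + EuclideanSpace.single i (T i)) a = S.l x a) ∧
  (∀ a ∈ S.A, ∀ x x₁ x₂ : XX n,
    ‖S.f x₁ a - S.f x₂ a‖ ≤ L * (1 + ‖a‖ ^ S.p) * ‖x₁ - x₂‖ ∧
    |S.l x₁ a - S.l x₂ a| ≤ L * (1 + ‖a‖ ^ S.q) * ‖x₁ - x₂‖ ∧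
    0 ≤ S.l x a ∧ S.l x a ≤ M * (1 + ‖a‖ ^ S.q) ∧
    ‖S.f x a‖ ≤ M * (1 + ‖a‖ ^ S.p)) ∧
  (∀ x z : XX n, ∃ Sf : ℝ, 0 < Sf ∧ ∃ μ, S.RAdmissible μ ∧
    (∃ k : Fin n → ℤ,
      S.rtraj x μ Sf = z + ∑ i, ((k i : ℝ) • EuclideanSpace.single i (T i))) ∧
    Sf ≤ C * torusDist T x z ^ γ)

end Sys

open Sys

/-! The time change `s(·)` pushes Lebesgue measure on `(0, t]` forward to `w₀(s)^q ds` on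
`(0, s(t)]`, so `∫₀ᵗ h(s(τ)) dτ = ∫₀^{s(t)} w₀^q h`. With `h = f(ξ, w/w₀)`, and
`w₀^q f(ξ, w/w₀) = f̄(ξ, w₀, w)` wherever `w₀ > 0`, this turns the integral equation of the
extended trajectory `ξ` into that of `ξ ∘ s` for the control `α`, and uniqueness of ordinary
trajectories gives `y_x(·, α) = ξ ∘ s`. With `h = |w/w₀|^q` it gives
`∫₀ᵀ |α|^q ≤ ∫₀^{s(T)} |w|^q ≤ s(T)`. -/

theorem ContinuousOn.comp_aemeasurable {α γ δ : Type*} [MeasurableSpace α]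
    [MeasurableSpace γ] [TopologicalSpace γ] [OpensMeasurableSpace γ]
    [MeasurableSpace δ] [TopologicalSpace δ] [BorelSpace δ]
    {C : Set γ} {F : γ → δ} (hF : ContinuousOn F C) {μ : Measure α} {h : α → γ}
    (hh : AEMeasurable h μ) (hmem : ∀ x, h x ∈ C) :
    AEMeasurable (fun x => F (h x)) μ :=
  hF.domRestrict.measurable.comp_aemeasurable (hh.subtype_mk (hfs := hmem))

theorem pow_mul_norm_inv_smul_pow_le {E : Type*} [NormedAddCommGroup E] [NormedSpace ℝ E]
    {r : ℝ} (hr : 0 ≤ r) (v : E) (k : ℕ) : r ^ k * ‖r⁻¹ • v‖ ^ k ≤ ‖v‖ ^ k := by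
  rw [← mul_pow]
  gcongr
  rw [norm_smul, norm_inv, Real.norm_of_nonneg hr, ← mul_assoc]
  exact mul_le_of_le_one_left (norm_nonneg v) mul_inv_le_one

theorem monotone_primitive_of_nonneg {φ : ℝ → ℝ} (hφ : ∀ s, 0 ≤ φ s)
    (hφi : ∀ a b, IntervalIntegrable φ volume a b) :
    Monotone fun s => ∫ σ in (0:ℝ)..s, φ σ := by
  intro a b hab
  have hsub := intervalIntegral.integral_interval_sub_left (hφi 0 b) (hφi 0 a)
  have hnonneg := intervalIntegral.integral_nonneg (μ := volume) hab fun σ _ => hφ σ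
  simp only
  linarith

structure IsPrimitiveInverse (φ g : ℝ → ℝ) : Prop where
  nonneg : ∀ t ≥ (0:ℝ), 0 ≤ g t
  left_inv : ∀ s ≥ (0:ℝ), g (∫ σ in (0:ℝ)..s, φ σ) = s
  right_inv : ∀ t ≥ (0:ℝ), (∫ σ in (0:ℝ)..(g t), φ σ) = t

namespace IsPrimitiveInverse

variable {φ g : ℝ → ℝ}

theorem map_zero (hg : IsPrimitiveInverse φ g) : g 0 = 0 := by
  simpa using hg.left_inv 0 le_rfl

theorem monotoneOn (hg : IsPrimitiveInverse φ g)
    (hF : Monotone fun s => ∫ σ in (0:ℝ)..s, φ σ) : MonotoneOn g (Ici 0) := by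
  intro a ha b hb hab
  by_contra! hlt
  have hba : b ≤ a := by simpa only [hg.right_inv a ha, hg.right_inv b hb] using hF hlt.le
  exact hlt.ne (by rw [le_antisymm hab hba])

theorem preimage_Iic_inter_Ioc (hg : IsPrimitiveInverse φ g)
    (hF : Monotone fun s => ∫ σ in (0:ℝ)..s, φ σ) {c : ℝ} (hc : 0 ≤ c) (t : ℝ) :
    g ⁻¹' Iic c ∩ Ioc 0 t = Ioc 0 (min t (∫ σ in (0:ℝ)..c, φ σ)) := by
  ext τ
  simp only [mem_inter_iff, mem_preimage, mem_Iic, mem_Ioc, le_min_iff]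
  constructor
  · rintro ⟨hτc, hτ0, hτt⟩
    refine ⟨hτ0, hτt, ?_⟩
    simpa only [hg.right_inv τ hτ0.le] using hF hτc
  · rintro ⟨hτ0, hτt, hτc⟩
    refine ⟨?_, hτ0, hτt⟩
    have hFc : 0 ≤ ∫ σ in (0:ℝ)..c, φ σ := by simpa using hF hc
    simpa only [hg.left_inv c hc] using hg.monotoneOn hF hτ0.le hFc hτc

theorem map_restrict_Ioc (hg : IsPrimitiveInverse φ g) (hgm : Measurable g)
    (hφ : ∀ s, 0 ≤ φ s) (hφi : ∀ a b, IntervalIntegrable φ volume a b)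
    {t : ℝ} (ht : 0 ≤ t) :
    (volume.restrict (Ioc 0 t)).map g =
      (volume.restrict (Ioc 0 (g t))).withDensity fun s => ENNReal.ofReal (φ s) := by
  have hF := monotone_primitive_of_nonneg hφ hφi
  have hν : ∀ c ≥ (0:ℝ), volume.withDensity (fun s => ENNReal.ofReal (φ s)) (Ioc 0 c) =
      ENNReal.ofReal (∫ σ in (0:ℝ)..c, φ σ) := fun c hc => by
    rw [withDensity_apply _ measurableSet_Ioc, intervalIntegral.integral_of_le hc,
      ofReal_integral_eq_lintegral_ofReal (hφi 0 c).1 (ae_of_all _ hφ)]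
  refine Measure.ext_of_Iic _ _ fun c => ?_
  rw [Measure.map_apply hgm measurableSet_Iic, Measure.restrict_apply (hgm measurableSet_Iic),
    ← restrict_withDensity measurableSet_Ioc, Measure.restrict_apply measurableSet_Iic,
    inter_comm (Iic c), Ioc_inter_Iic]
  rcases lt_or_ge c 0 with hc | hc
  · have hempty : g ⁻¹' Iic c ∩ Ioc 0 t = ∅ :=
      eq_empty_of_forall_notMem fun τ ⟨hτc, hτ⟩ =>
        (hg.nonneg τ hτ.1.le).not_gt (lt_of_le_of_lt hτc hc)
    rw [hempty, Ioc_eq_empty (by simp [hc.le])]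
    simp
  · rw [hg.preimage_Iic_inter_Ioc hF hc, Real.volume_Ioc, hν _ (le_min (hg.nonneg t ht) hc),
      hF.map_min, hg.right_inv t ht, sub_zero, min_comm]

theorem lintegral_comp (hg : IsPrimitiveInverse φ g) (hgm : Measurable g)
    (hφm : Measurable φ) (hφ : ∀ s, 0 ≤ φ s) (hφi : ∀ a b, IntervalIntegrable φ volume a b)
    {h : ℝ → ℝ≥0∞} (hh : Measurable h) {t : ℝ} (ht : 0 ≤ t) :
    ∫⁻ τ in Ioc 0 t, h (g τ) = ∫⁻ s in Ioc 0 (g t), ENNReal.ofReal (φ s) * h s := by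
  rw [← lintegral_map hh hgm, hg.map_restrict_Ioc hgm hφ hφi ht,
    lintegral_withDensity_eq_lintegral_mul _ hφm.ennreal_ofReal hh]
  rfl

theorem integral_comp {E : Type*} [NormedAddCommGroup E] [NormedSpace ℝ E]
    (hg : IsPrimitiveInverse φ g) (hgm : Measurable g)
    (hφm : Measurable φ) (hφ : ∀ s, 0 ≤ φ s) (hφi : ∀ a b, IntervalIntegrable φ volume a b)
    {t : ℝ} (ht : 0 ≤ t) {H : ℝ → E}
    (hH : AEStronglyMeasurable H (volume.restrict (Ioc 0 (g t)))) :
    ∫ τ in Ioc 0 t, H (g τ) = ∫ s in Ioc 0 (g t), φ s • H s := by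
  have hmap := hg.map_restrict_Ioc hgm hφ hφi ht
  rw [← integral_map hgm.aemeasurable
      (hmap ▸ hH.mono_ac (withDensity_absolutelyContinuous _ _)), hmap,
    integral_withDensity_eq_integral_toReal_smul hφm.ennreal_ofReal
      (ae_of_all _ fun _ => ENNReal.ofReal_lt_top)]
  simp only [ENNReal.toReal_ofReal (hφ _)]

end IsPrimitiveInverse

namespace Sys

variable {n m : ℕ}

theorem SolvesODE.comp_primitiveInverse {φ g : ℝ → ℝ} {ξ V v : ℝ → XX n} {x : XX n}
    (hξ : SolvesODE ξ x v) (hg : IsPrimitiveInverse φ g) (hgc : Continuous g)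
    (hφm : Measurable φ) (hφ : ∀ s, 0 ≤ φ s) (hφi : ∀ a b, IntervalIntegrable φ volume a b)
    (hv : ∀ᵐ s ∂(volume.restrict (Ioi 0)), v s = φ s • V s)
    (hV : ∀ c, AEStronglyMeasurable V (volume.restrict (Ioc 0 c))) :
    SolvesODE (fun t => ξ (g t)) x (fun t => V (g t)) := by
  obtain ⟨hcont, hx, hint⟩ := hξ
  refine ⟨hcont.comp hgc.continuousOn hg.nonneg, by simp only [hg.map_zero, hx], fun t ht => ?_⟩
  dsimp only
  have hgt := hg.nonneg t ht
  have hv' : ∀ᵐ s ∂(volume.restrict (Ioc 0 (g t))), v s = φ s • V s :=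
    ae_restrict_of_ae_restrict_of_subset Ioc_subset_Ioi_self hv
  rw [hint (g t) hgt, intervalIntegral.integral_of_le hgt, intervalIntegral.integral_of_le ht,
    integral_congr_ae hv', hg.integral_comp hgc.measurable hφm hφ hφi ht (hV _)]

variable {S : Sys n m} {w₀ : ℝ → ℝ} {w : ℝ → UU m}

theorem EAdmissible.nonneg (hw : S.EAdmissible w₀ w) (s : ℝ) : 0 ≤ w₀ s :=
  (hw.2.2 s).1

theorem EAdmissible.pow_le_one (hw : S.EAdmissible w₀ w) (s : ℝ) : w₀ s ^ S.q ≤ 1 := by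
  have hsum := (hw.2.2 s).2.2
  have := pow_nonneg (norm_nonneg (w s)) S.q
  linarith

theorem EAdmissible.norm_pow_le_one (hw : S.EAdmissible w₀ w) (s : ℝ) : ‖w s‖ ^ S.q ≤ 1 := by
  have hsum := (hw.2.2 s).2.2
  have := pow_nonneg (hw.nonneg s) S.q
  linarith

theorem EAdmissible.intervalIntegrable_pow (hw : S.EAdmissible w₀ w) (a b : ℝ) :
    IntervalIntegrable (fun s => w₀ s ^ S.q) volume a b :=
  intervalIntegrable_const.mono_fun' (hw.1.pow_const _).aestronglyMeasurable <|
    ae_of_all _ fun s => by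
      simpa only [Real.norm_of_nonneg (pow_nonneg (hw.nonneg s) _)] using hw.pow_le_one s

theorem EAdmissible.measurable_inv_smul (hw : S.EAdmissible w₀ w) :
    Measurable fun s => (w₀ s)⁻¹ • w s :=
  hw.1.inv.smul hw.2.1

theorem EAdmissible.inv_smul_mem (hA : S.ACone) (hw : S.EAdmissible w₀ w) (s : ℝ) :
    (w₀ s)⁻¹ • w s ∈ S.A :=
  hA.2.2.1 _ (inv_nonneg.2 (hw.nonneg s)) _ (hw.2.2 s).2.1

theorem admissible_comp_primitiveInverse (hA : S.ACone) (hw : S.EAdmissible w₀ w) {g : ℝ → ℝ}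
    (hg : IsPrimitiveInverse (fun s => w₀ s ^ S.q) g) (hgm : Measurable g) :
    S.Admissible fun t => (w₀ (g t))⁻¹ • w (g t) := by
  have ha := hw.measurable_inv_smul
  refine ⟨ha.comp hgm, fun t => hw.inv_smul_mem hA (g t), fun T hT =>
    ⟨((ha.comp hgm).norm.pow_const _).aestronglyMeasurable, ?_⟩⟩
  rw [hasFiniteIntegral_iff_ofReal (ae_of_all _ fun _ => by positivity),
    hg.lintegral_comp hgm (hw.1.pow_const _) (fun s => pow_nonneg (hw.nonneg s) _)
      hw.intervalIntegrable_pow (ha.norm.pow_const _).ennreal_ofReal hT.le]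
  calc ∫⁻ s in Ioc 0 (g T), ENNReal.ofReal (w₀ s ^ S.q) * ENNReal.ofReal (‖(w₀ s)⁻¹ • w s‖ ^ S.q)
      ≤ ∫⁻ _ in Ioc 0 (g T), 1 := lintegral_mono fun s => by
        rw [← ENNReal.ofReal_mul (pow_nonneg (hw.nonneg s) _), ← ENNReal.ofReal_one]
        exact ENNReal.ofReal_le_ofReal
          ((pow_mul_norm_inv_smul_pow_le (hw.nonneg s) (w s) S.q).trans (hw.norm_pow_le_one s))
    _ < ⊤ := by
      rw [setLIntegral_one]
      exact measure_Ioc_lt_top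

theorem solvesODE_comp_primitiveInverse (hA : S.ACone)
    (hf : ContinuousOn (fun z : XX n × UU m => S.f z.1 z.2) (univ ×ˢ S.A))
    (hw : S.EAdmissible w₀ w) (hpos : ∀ᵐ s ∂(volume.restrict (Ioi (0:ℝ))), 0 < w₀ s)
    {ξ : ℝ → XX n} {x : XX n} (hξ : SolvesODE ξ x fun s => S.fbar (ξ s) (w₀ s) (w s))
    {g : ℝ → ℝ} (hg : IsPrimitiveInverse (fun s => w₀ s ^ S.q) g) (hgc : Continuous g) :
    SolvesODE (fun t => ξ (g t)) x fun t => S.f (ξ (g t)) ((w₀ (g t))⁻¹ • w (g t)) := by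
  refine hξ.comp_primitiveInverse hg hgc (hw.1.pow_const _) (fun s => pow_nonneg (hw.nonneg s) _)
    hw.intervalIntegrable_pow (hpos.mono fun s hs => if_neg hs.ne') fun c => ?_
  have hξm : AEMeasurable ξ (volume.restrict (Ioc 0 c)) :=
    (hξ.1.aemeasurable measurableSet_Ici).mono_measure
      (Measure.restrict_mono (Ioc_subset_Ioi_self.trans Ioi_subset_Ici_self) le_rfl)
  exact (hf.comp_aemeasurable (hξm.prodMk hw.measurable_inv_smul.aemeasurable)
    fun s => ⟨trivial, hw.inv_smul_mem hA s⟩).aestronglyMeasurable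

end Sys

theorem stmt_1_general {n m : ℕ} (S : Sys n m) (hS : S.Setup)
    (w₀ : ℝ → ℝ) (w : ℝ → UU m) (hw : S.EAdmissible w₀ w)
    (hpos : ∀ᵐ s ∂(volume.restrict (Ioi (0:ℝ))), 0 < w₀ s)
    (sf : ℝ → ℝ) (hsf0 : ∀ t ≥ (0:ℝ), 0 ≤ sf t) (hsfc : Continuous sf)
    (hsf1 : ∀ s ≥ (0:ℝ), sf (∫ σ in (0:ℝ)..s, (w₀ σ) ^ S.q) = s)
    (hsf2 : ∀ t ≥ (0:ℝ), (∫ σ in (0:ℝ)..(sf t), (w₀ σ) ^ S.q) = t) :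
    ∀ α : ℝ → UU m, (∀ t, α t = (w₀ (sf t))⁻¹ • w (sf t)) →
      S.Admissible α ∧
      ∀ x : XX n, ∀ t ≥ (0:ℝ), S.traj x α t = S.etraj x w₀ w (sf t) := by
  obtain ⟨hA, ⟨-, -, hf, -⟩, -, hTraj, hETraj, -⟩ := hS
  have hsf : IsPrimitiveInverse (fun s => w₀ s ^ S.q) sf := ⟨hsf0, hsf1, hsf2⟩
  intro α hα
  obtain rfl : α = fun t => (w₀ (sf t))⁻¹ • w (sf t) := funext hα
  have hadm := admissible_comp_primitiveInverse hA hw hsf hsfc.measurable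
  refine ⟨hadm, fun x t ht => ((hTraj x _ hadm).2 (fun t => S.etraj x w₀ w (sf t)) ?_ t ht).symm⟩
  exact solvesODE_comp_primitiveInverse hA hf hw hpos (hETraj x w₀ w hw).1 hsf hsfc

/-- an extended control `(w₀,w) ∈ Γ⁺` with `∫₀^∞ w₀^q = ∞` gives rise,
via the continuous inverse `s(·)` of `t(s) = ∫₀^s w₀^q dσ`, to an ordinary admissible
control `α(t) = w(s(t))/w₀(s(t))` whose trajectory is the reparametrised extended one. -/
theorem stmt_1 {n m : ℕ} (hn : 1 ≤ n) (hm : 1 ≤ m) (S : Sys n m) (hS : S.Setup)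
    (w₀ : ℝ → ℝ) (w : ℝ → UU m) (hw : S.EAdmissible w₀ w)
    (hpos : ∀ᵐ s ∂(volume.restrict (Ioi (0:ℝ))), 0 < w₀ s)
    (hdiv : ∫⁻ s in Ioi (0:ℝ), ENNReal.ofReal ((w₀ s) ^ S.q) = ⊤)
    (sf : ℝ → ℝ) (hsf0 : ∀ t ≥ (0:ℝ), 0 ≤ sf t) (hsfc : Continuous sf)
    (hsf1 : ∀ s ≥ (0:ℝ), sf (∫ σ in (0:ℝ)..s, (w₀ σ) ^ S.q) = s)
    (hsf2 : ∀ t ≥ (0:ℝ), (∫ σ in (0:ℝ)..(sf t), (w₀ σ) ^ S.q) = t) :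
    ∀ α : ℝ → UU m, (∀ t, α t = (w₀ (sf t))⁻¹ • w (sf t)) →
      S.Admissible α ∧
      ∀ x : XX n, ∀ t ≥ (0:ℝ), S.traj x α t = S.etraj x w₀ w (sf t) :=
  stmt_1_general S hS w₀ w hw hpos sf hsf0 hsfc hsf1 hsf2
end
end

section
/- For every x ∈ ℝⁿ and every extended control (w₀,w) ∈ Γ such that the extended infinite-horizon cost is finite, i.e. J(+∞,x,w₀,w) = ∫₀^∞ l̄(ξ_x(s,w₀,w),w₀(s),w(s)) ds < +∞, one necessarily has ∫₀^∞ w₀^q(s) ds = +∞. -/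
open MeasureTheory Filter Topology Set RealInnerProductSpace
open scoped ENNReal NNReal

noncomputable section

open Sys

/-! By (H1) and the cone property, `l̄(x,w₀,w) ≥ C₂|w|^q - C₁w₀^q` (for `w₀ = 0` in the limit
defining `l^∞`). On `S(A)` this reads `l̄ + (C₁ + C₂)w₀^q ≥ C₂`, and integrating over `(0,∞)`
gives `∞ ≤ J(+∞,x,w₀,w) + (C₁ + C₂)∫₀^∞ w₀^q`. -/

theorem MeasureTheory.lintegral_eq_top_of_le_add_const_mul {α : Type*} [MeasurableSpace α]
    {μ : Measure α} (hμ : μ univ = ⊤) {c K : ℝ≥0∞} (hc : c ≠ 0) (hK : K ≠ ⊤)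
    {F G : α → ℝ≥0∞} (hG : AEMeasurable G μ) (hle : ∀ a, c ≤ F a + K * G a)
    (hF : ∫⁻ a, F a ∂μ ≠ ⊤) : ∫⁻ a, G a ∂μ = ⊤ := by
  by_contra hGtop
  have hsum : ∫⁻ a, F a + K * G a ∂μ ≠ ⊤ := by
    rw [lintegral_add_right' _ (hG.const_mul K), lintegral_const_mul'' K hG]
    exact ENNReal.add_ne_top.mpr ⟨hF, ENNReal.mul_ne_top hK hGtop⟩
  refine hsum (top_le_iff.mp ?_)
  calc ⊤ = ∫⁻ _, c ∂μ := by rw [lintegral_const, hμ, ENNReal.mul_top hc]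
    _ ≤ ∫⁻ a, F a + K * G a ∂μ := lintegral_mono hle

namespace Sys

variable {n m : ℕ} (S : Sys n m)

theorem sub_le_pow_mul_l_inv_smul (hA : S.ACone) (hH1 : S.H1) (x : XX n) {w : UU m}
    (hw : w ∈ S.A) {ρ : ℝ} (hρ : 0 < ρ) :
    S.C₂ * ‖w‖ ^ S.q - S.C₁ * ρ ^ S.q ≤ ρ ^ S.q * S.l x (ρ⁻¹ • w) := by
  have hl := hH1.2.2.1 x _ (hA.2.2.1 ρ⁻¹ (inv_nonneg.mpr hρ.le) w hw)
  have hnorm : ρ ^ S.q * ‖ρ⁻¹ • w‖ ^ S.q = ‖w‖ ^ S.q := by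
    rw [norm_smul, Real.norm_eq_abs, abs_of_pos (inv_pos.mpr hρ), mul_pow, ← mul_assoc,
      ← mul_pow, mul_inv_cancel₀ hρ.ne', one_pow, one_mul]
  calc S.C₂ * ‖w‖ ^ S.q - S.C₁ * ρ ^ S.q
      = ρ ^ S.q * (S.C₂ * ‖ρ⁻¹ • w‖ ^ S.q - S.C₁) := by rw [← hnorm]; ring
    _ ≤ ρ ^ S.q * S.l x (ρ⁻¹ • w) := by gcongr

theorem tendsto_pow_mul_l_inv_smul (hH1 : S.H1) (x : XX n) {w : UU m} (hw : w ∈ S.A) :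
    Tendsto (fun ρ : ℝ => ρ ^ S.q * S.l x (ρ⁻¹ • w)) (𝓝[>] 0) (𝓝 (S.lInf x w)) := by
  have hsub : ({(x, w)} : Set (XX n × UU m)) ⊆ univ ×ˢ S.A := by
    simpa using hw
  exact ((hH1.2.2.2.2.2 _ isCompact_singleton hsub).2).tendsto_at (mem_singleton _)

theorem sub_le_lbar (hA : S.ACone) (hH1 : S.H1) (x : XX n) {w₀ : ℝ} {w : UU m}
    (hw₀ : 0 ≤ w₀) (hw : w ∈ S.A) :
    S.C₂ * ‖w‖ ^ S.q - S.C₁ * w₀ ^ S.q ≤ S.lbar x w₀ w := by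
  rcases hw₀.eq_or_lt with rfl | hpos
  · rw [lbar, if_pos rfl]
    have hlower : Tendsto (fun ρ : ℝ => S.C₂ * ‖w‖ ^ S.q - S.C₁ * ρ ^ S.q) (𝓝[>] 0)
        (𝓝 (S.C₂ * ‖w‖ ^ S.q - S.C₁ * 0 ^ S.q)) :=
      (Continuous.tendsto (by fun_prop) 0).mono_left nhdsWithin_le_nhds
    refine le_of_tendsto_of_tendsto hlower (S.tendsto_pow_mul_l_inv_smul hH1 x hw) ?_
    filter_upwards [self_mem_nhdsWithin] with ρ hρ
    exact S.sub_le_pow_mul_l_inv_smul hA hH1 x hw hρ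
  · rw [lbar, if_neg hpos.ne']
    exact S.sub_le_pow_mul_l_inv_smul hA hH1 x hw hpos

theorem C₂_le_lbar_add (hA : S.ACone) (hH1 : S.H1) (x : XX n) {w₀ : ℝ} {w : UU m}
    (h : (w₀, w) ∈ S.SAset) :
    S.C₂ ≤ S.lbar x w₀ w + (S.C₁ + S.C₂) * w₀ ^ S.q := by
  obtain ⟨hw₀, hw, hsphere⟩ := h
  have hcoercive := S.sub_le_lbar hA hH1 x hw₀ hw
  linear_combination hcoercive - S.C₂ * hsphere

end Sys

theorem stmt_2_general {n m : ℕ} (S : Sys n m) (hS : S.Setup)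
    (x : XX n) (w₀ : ℝ → ℝ) (w : ℝ → UU m) (hw : S.EAdmissible w₀ w)
    (hfin : S.eInfCost x w₀ w < ⊤) :
    ∫⁻ s in Ioi (0:ℝ), ENNReal.ofReal ((w₀ s) ^ S.q) = ⊤ := by
  obtain ⟨hA, -, hH1, -⟩ := hS
  have hK : 0 ≤ S.C₁ + S.C₂ := add_nonneg hH1.1 hH1.2.1.le
  refine lintegral_eq_top_of_le_add_const_mul (K := ENNReal.ofReal (S.C₁ + S.C₂))
    (F := fun s => ENNReal.ofReal (S.lbar (S.etraj x w₀ w s) (w₀ s) (w s)))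
    (by simp) (ENNReal.ofReal_pos.mpr hH1.2.1).ne' ENNReal.ofReal_ne_top
    (hw.1.pow_const S.q).ennreal_ofReal.aemeasurable (fun s => ?_) hfin.ne
  calc ENNReal.ofReal S.C₂
      ≤ ENNReal.ofReal (S.lbar (S.etraj x w₀ w s) (w₀ s) (w s) + (S.C₁ + S.C₂) * w₀ s ^ S.q) :=
        ENNReal.ofReal_le_ofReal (S.C₂_le_lbar_add hA hH1 _ (hw.2.2 s))
    _ ≤ _ := by rw [← ENNReal.ofReal_mul hK]; exact ENNReal.ofReal_add_le

/-- any extended control with finite extended infinite-horizon cost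
necessarily satisfies `∫₀^∞ w₀^q(s) ds = +∞`. -/
theorem stmt_2 {n m : ℕ} (hn : 1 ≤ n) (hm : 1 ≤ m) (S : Sys n m) (hS : S.Setup)
    (x : XX n) (w₀ : ℝ → ℝ) (w : ℝ → UU m) (hw : S.EAdmissible w₀ w)
    (hfin : S.eInfCost x w₀ w < ⊤) :
    ∫⁻ s in Ioi (0:ℝ), ENNReal.ofReal ((w₀ s) ^ S.q) = ⊤ :=
  stmt_2_general S hS x w₀ w hw hfin
end
end

section
/- Assume liminf_{|x|→+∞} inf_{a∈A} l(x,a) > 0. Then for every x ∈ ℝⁿ with V^r(x) < +∞ and every optimal relaxed control μ ∈ Γ^r (i.e. such that J^r(+∞,x,μ) = V^r(x) < +∞), the corresponding relaxed trajectory is bounded: sup_{s≥0} |ξ^r_x(s,μ)| < +∞. -/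
open MeasureTheory Filter Topology Set RealInnerProductSpace
open scoped ENNReal NNReal

noncomputable section

open Sys

/-!
Far from the origin the relaxed running cost `l̄^r` is bounded below by a positive constant, so
a relaxed control of finite cost keeps its trajectory outside a large ball only during a set of
times of finite measure `T`. Since `|f̄^r(x, μ)| ≤ 2M(1 + |x|)`, Grönwall's inequality bounds the
growth of `1 + |ξ|` over any excursion outside the ball by the factor `e^{2MT}`.
-/

section

variable {E : Type*} [NormedAddCommGroup E] [NormedSpace ℝ E]

theorem tendsto_pow_nhdsGT_zero {k : ℕ} (hk : k ≠ 0) :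
    Tendsto (fun ρ : ℝ => ρ ^ k) (𝓝[>] 0) (𝓝 0) :=
  ((continuous_pow k).tendsto' 0 0 (zero_pow hk)).mono_left nhdsWithin_le_nhds

theorem one_add_norm_le_mul_exp_of_sub_eq_integral {g v : ℝ → E} {a b K : ℝ} (hab : a ≤ b)
    (hg : ContinuousOn g (Icc a b)) (hv : IntervalIntegrable v volume a b)
    (hgv : ∀ τ ∈ Icc a b, g τ - g a = ∫ s in a..τ, v s)
    (hvg : ∀ s ∈ Icc a b, ‖v s‖ ≤ K * (1 + ‖g s‖)) :
    1 + ‖g b‖ ≤ (1 + ‖g a‖) * Real.exp (K * (b - a)) := by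
  have hK : 0 ≤ K :=
    nonneg_of_mul_nonneg_left ((norm_nonneg _).trans (hvg a (left_mem_Icc.2 hab))) (by positivity)
  set h : ℝ → ℝ := IccExtend hab fun τ => 1 + ‖g τ‖
  have hh : Continuous h := (continuous_const.add hg.domRestrict.norm).Icc_extend'
  have hh_eq : ∀ τ ∈ Icc a b, h τ = 1 + ‖g τ‖ := fun τ hτ => IccExtend_of_mem hab _ hτ
  set φ : ℝ → ℝ := fun τ => (1 + ‖g a‖) + ∫ s in a..τ, K * h s
  have hφ' : ∀ τ, HasDerivAt φ (K * h τ) τ := fun τ =>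
    ((hh.const_smul K).integral_hasStrictDerivAt a τ).hasDerivAt.const_add _
  -- `φ` dominates `1 + ‖g‖` and grows at rate at most `K φ`
  have hgφ : ∀ τ ∈ Icc a b, 1 + ‖g τ‖ ≤ φ τ := by
    intro τ hτ
    have hv' : IntervalIntegrable v volume a τ :=
      hv.mono_set (uIcc_subset_uIcc_left (by rwa [uIcc_of_le hab]))
    have : ‖g τ - g a‖ ≤ ∫ s in a..τ, K * h s := by
      rw [hgv τ hτ]
      refine (intervalIntegral.norm_integral_le_integral_norm hτ.1).trans
        (intervalIntegral.integral_mono_on hτ.1 hv'.norm ((hh.const_smul K).intervalIntegrable _ _)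
          fun s hs => ?_)
      rw [hh_eq s ⟨hs.1, hs.2.trans hτ.2⟩]
      exact hvg s ⟨hs.1, hs.2.trans hτ.2⟩
    have := norm_le_norm_add_norm_sub' (g τ) (g a)
    simp only [φ]
    linarith
  have hgron := le_gronwallBound_of_liminf_deriv_right_le (f := φ) (f' := fun τ => K * h τ)
    (δ := 1 + ‖g a‖) (K := K) (ε := 0) (a := a) (b := b)
    (fun τ _ => (hφ' τ).continuousAt.continuousWithinAt)
    (fun τ _ r hr => (hφ' τ).hasDerivWithinAt.liminf_right_slope_le hr)
    (by simp [φ]) (fun τ hτ => by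
      rw [add_zero, hh_eq τ (Ico_subset_Icc_self hτ)]
      exact mul_le_mul_of_nonneg_left (hgφ τ (Ico_subset_Icc_self hτ)) hK)
    b (right_mem_Icc.2 hab)
  rw [gronwallBound_ε0] at hgron
  exact (hgφ b (right_mem_Icc.2 hab)).trans hgron

theorem pow_mul_norm_inv_smul_pow {ρ : ℝ} (hρ : 0 < ρ) (w : E) (k : ℕ) :
    ρ ^ k * ‖ρ⁻¹ • w‖ ^ k = ‖w‖ ^ k := by
  rw [norm_smul, Real.norm_of_nonneg (inv_nonneg.2 hρ.le), mul_pow, ← mul_assoc, ← mul_pow,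
    mul_inv_cancel₀ hρ.ne', one_pow, one_mul]

theorem exists_le_forall_lt_of_continuousOn {f : ℝ → ℝ} {a b R : ℝ} (hab : a ≤ b)
    (hf : ContinuousOn f (Icc a b)) (ha : f a ≤ R) :
    ∃ σ ∈ Icc a b, f σ ≤ R ∧ ∀ τ ∈ Ioc σ b, R < f τ := by
  set K := Icc a b ∩ f ⁻¹' Iic R
  have hK : IsCompact K :=
    isCompact_Icc.of_isClosed_subset (hf.preimage_isClosed_of_isClosed isClosed_Icc isClosed_Iic)
      inter_subset_left
  obtain ⟨hσ, hfσ⟩ := hK.sSup_mem ⟨a, left_mem_Icc.2 hab, ha⟩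
  refine ⟨sSup K, hσ, hfσ, fun τ hτ => lt_of_not_ge fun hfτ => ?_⟩
  exact hτ.1.not_ge (le_csSup hK.bddAbove ⟨⟨hσ.1.trans hτ.1.le, hτ.2⟩, hfτ⟩)

theorem exists_norm_le_of_volume_setOf_le_norm_ne_top {g v : ℝ → E} {K R : ℝ}
    (hg : ContinuousOn g (Ici 0)) (hgv : ∀ t ≥ 0, g t = g 0 + ∫ s in 0..t, v s)
    (hvg : ∀ s ≥ 0, ‖v s‖ ≤ K * (1 + ‖g s‖))
    (hfar : volume {s ∈ Ioi 0 | R ≤ ‖g s‖} ≠ ⊤) :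
    ∃ B, ∀ t ≥ 0, ‖g t‖ ≤ B := by
  have hK : 0 ≤ K :=
    nonneg_of_mul_nonneg_left ((norm_nonneg _).trans (hvg 0 le_rfl)) (by positivity)
  set R' := max R ‖g 0‖
  set T := (volume {s ∈ Ioi 0 | R ≤ ‖g s‖}).toReal
  have hR'B : R' ≤ (1 + R') * Real.exp (K * T) := by
    have := Real.one_le_exp (by positivity : 0 ≤ K * T)
    have : 0 ≤ R' := (norm_nonneg _).trans (le_max_right _ _)
    nlinarith
  refine ⟨(1 + R') * Real.exp (K * T), fun t ht => ?_⟩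
  by_cases hv : IntervalIntegrable v volume 0 t
  swap
  · rw [hgv t ht, intervalIntegral.integral_undef hv, add_zero]
    exact (le_max_right _ _).trans hR'B
  -- after the last time `σ ≤ t` at which `g` is in the ball of radius `R'`, it stays outside
  obtain ⟨σ, hσ, hgσ, hout⟩ := exists_le_forall_lt_of_continuousOn (f := fun s => ‖g s‖) ht
    (hg.mono Icc_subset_Ici_self).norm (le_max_right R _)
  have hlen : t - σ ≤ T := by
    have hsub : Ioc σ t ⊆ {s ∈ Ioi 0 | R ≤ ‖g s‖} := fun τ hτ =>
      ⟨hσ.1.trans_lt hτ.1, (le_max_left _ _).trans (hout τ hτ).le⟩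
    have := ENNReal.toReal_mono hfar (measure_mono hsub)
    rwa [Real.volume_Ioc, ENNReal.toReal_ofReal (sub_nonneg.2 hσ.2)] at this
  have hv_sub : ∀ τ ∈ Icc 0 t, IntervalIntegrable v volume 0 τ := fun τ hτ =>
    hv.mono_set (uIcc_subset_uIcc_left (by rwa [uIcc_of_le ht]))
  have hgv' : ∀ τ ∈ Icc σ t, g τ - g σ = ∫ s in σ..τ, v s := fun τ hτ => by
    rw [hgv τ (hσ.1.trans hτ.1), hgv σ hσ.1, add_sub_add_left_eq_sub,
      intervalIntegral.integral_interval_sub_left (hv_sub τ ⟨hσ.1.trans hτ.1, hτ.2⟩)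
        (hv_sub σ hσ)]
  have hgron := one_add_norm_le_mul_exp_of_sub_eq_integral hσ.2
    (hg.mono fun τ hτ => hσ.1.trans hτ.1)
    (hv.mono_set (uIcc_subset_uIcc_right (by rwa [uIcc_of_le ht]))) hgv'
    (fun s hs => hvg s (hσ.1.trans hs.1))
  calc ‖g t‖ ≤ (1 + ‖g σ‖) * Real.exp (K * (t - σ)) := by linarith
    _ ≤ (1 + R') * Real.exp (K * T) := by gcongr

end

namespace Sys

variable {n m : ℕ} {S : Sys n m}

theorem ACone.smul_mem (hA : S.ACone) {c : ℝ} (hc : 0 ≤ c) {a : UU m} (ha : a ∈ S.A) :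
    c • a ∈ S.A :=
  hA.2.2.1 c hc a ha

theorem ACone.isClosed_KA (hA : S.ACone) : IsClosed S.KA :=
  hA.1.inter (isClosed_le continuous_norm continuous_const)

theorem H0.q_ne_zero (h0 : S.H0) : S.q ≠ 0 :=
  Nat.one_le_iff_ne_zero.1 (h0.1.trans h0.2.1)

theorem H0.norm_f_le (h0 : S.H0) (y : XX n) {a : UU m} (ha : a ∈ S.A) :
    ‖S.f y a‖ ≤ S.M * (1 + ‖a‖ ^ S.p) * (1 + ‖y‖) :=
  h0.2.2.2.2.2.2.2.2 y a ha

theorem H0.l_nonneg_and_le (h0 : S.H0) (y : XX n) {a : UU m} (ha : a ∈ S.A) :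
    0 ≤ S.l y a ∧ S.l y a ≤ S.MR (‖y‖ + 1) * (1 + ‖a‖ ^ S.q) := by
  have hy : ‖y‖ ≤ ‖y‖ + 1 := by linarith
  exact (h0.2.2.2.2.2.2.2.1 (‖y‖ + 1) (by positivity) a ha y y y hy hy hy).2.2

theorem H1.tendsto_f (h1 : S.H1) (y : XX n) {w : UU m} (hw : w ∈ S.A) :
    Tendsto (fun ρ : ℝ => ρ ^ S.q • S.f y (ρ⁻¹ • w)) (𝓝[>] 0) (𝓝 (S.fInf y w)) :=
  (h1.2.2.2.2.2 {(y, w)} isCompact_singleton (singleton_subset_iff.2 ⟨mem_univ _, hw⟩)).1.tendsto_at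
    (mem_singleton _)

theorem H1.tendsto_l (h1 : S.H1) (y : XX n) {w : UU m} (hw : w ∈ S.A) :
    Tendsto (fun ρ : ℝ => ρ ^ S.q * S.l y (ρ⁻¹ • w)) (𝓝[>] 0) (𝓝 (S.lInf y w)) :=
  (h1.2.2.2.2.2 {(y, w)} isCompact_singleton (singleton_subset_iff.2 ⟨mem_univ _, hw⟩)).2.tendsto_at
    (mem_singleton _)

theorem w0of_mem_Icc {w : UU m} (hw : ‖w‖ ≤ 1) : S.w0of w ∈ Icc 0 1 := by
  have : ‖w‖ ^ S.q ≤ 1 := pow_le_one₀ (norm_nonneg w) hw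
  exact ⟨Real.rpow_nonneg (by linarith) _,
    Real.rpow_le_one (by linarith) (by linarith [pow_nonneg (norm_nonneg w) S.q]) (by positivity)⟩

theorem w0of_pow (hq : S.q ≠ 0) {w : UU m} (hw : ‖w‖ ≤ 1) :
    S.w0of w ^ S.q = 1 - ‖w‖ ^ S.q :=
  Real.rpow_inv_natCast_pow (sub_nonneg.2 (pow_le_one₀ (norm_nonneg w) hw)) hq

theorem continuous_w0of (hq : S.q ≠ 0) : Continuous S.w0of :=
  (continuous_const.sub (continuous_norm.pow S.q)).rpow_const fun _ => Or.inr (by positivity)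

theorem norm_pow_smul_f_inv_smul_le (hA : S.ACone) (h0 : S.H0) (y : XX n) {w : UU m}
    (hw : w ∈ S.KA) {ρ : ℝ} (hρ : ρ ∈ Ioc 0 1) :
    ‖ρ ^ S.q • S.f y (ρ⁻¹ • w)‖ ≤ 2 * S.M * (1 + ‖y‖) := by
  have hM : 0 < S.M := h0.2.2.2.2.1
  have hqp : ρ ^ S.q ≤ ρ ^ S.p := pow_le_pow_of_le_one hρ.1.le hρ.2 h0.2.1
  have hsum : ρ ^ S.p * (1 + ‖ρ⁻¹ • w‖ ^ S.p) ≤ 2 := by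
    rw [mul_one_add, pow_mul_norm_inv_smul_pow hρ.1]
    linarith [pow_le_one₀ hρ.1.le hρ.2 (n := S.p), pow_le_one₀ (norm_nonneg w) hw.2 (n := S.p)]
  calc ‖ρ ^ S.q • S.f y (ρ⁻¹ • w)‖ = ρ ^ S.q * ‖S.f y (ρ⁻¹ • w)‖ := by
        rw [norm_smul, Real.norm_of_nonneg (pow_nonneg hρ.1.le _)]
    _ ≤ ρ ^ S.p * (S.M * (1 + ‖ρ⁻¹ • w‖ ^ S.p) * (1 + ‖y‖)) :=
        mul_le_mul hqp (h0.norm_f_le y (hA.smul_mem (inv_nonneg.2 hρ.1.le) hw.1))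
          (norm_nonneg _) (pow_nonneg hρ.1.le _)
    _ = ρ ^ S.p * (1 + ‖ρ⁻¹ • w‖ ^ S.p) * (S.M * (1 + ‖y‖)) := by ring
    _ ≤ 2 * (S.M * (1 + ‖y‖)) :=
        mul_le_mul_of_nonneg_right hsum (mul_pos hM (by positivity)).le
    _ = 2 * S.M * (1 + ‖y‖) := by ring

theorem pow_mul_l_inv_smul_le (hA : S.ACone) (h0 : S.H0) (y : XX n) {w : UU m}
    (hw : w ∈ S.A) {ρ : ℝ} (hρ : 0 < ρ) :
    ρ ^ S.q * S.l y (ρ⁻¹ • w) ≤ S.MR (‖y‖ + 1) * (ρ ^ S.q + ‖w‖ ^ S.q) := by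
  calc ρ ^ S.q * S.l y (ρ⁻¹ • w) ≤ ρ ^ S.q * (S.MR (‖y‖ + 1) * (1 + ‖ρ⁻¹ • w‖ ^ S.q)) := by
        gcongr
        exact (h0.l_nonneg_and_le y (hA.smul_mem (inv_nonneg.2 hρ.le) hw)).2
    _ = S.MR (‖y‖ + 1) * (ρ ^ S.q + ρ ^ S.q * ‖ρ⁻¹ • w‖ ^ S.q) := by ring
    _ = S.MR (‖y‖ + 1) * (ρ ^ S.q + ‖w‖ ^ S.q) := by rw [pow_mul_norm_inv_smul_pow hρ]

theorem coercive_le_pow_mul_l_inv_smul (hA : S.ACone) (h1 : S.H1) (y : XX n) {w : UU m}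
    (hw : w ∈ S.A) {ρ : ℝ} (hρ : 0 < ρ) :
    S.C₂ * ‖w‖ ^ S.q - S.C₁ * ρ ^ S.q ≤ ρ ^ S.q * S.l y (ρ⁻¹ • w) := by
  calc S.C₂ * ‖w‖ ^ S.q - S.C₁ * ρ ^ S.q
      = ρ ^ S.q * (S.C₂ * ‖ρ⁻¹ • w‖ ^ S.q - S.C₁) := by
        rw [← pow_mul_norm_inv_smul_pow hρ w S.q]; ring
    _ ≤ ρ ^ S.q * S.l y (ρ⁻¹ • w) := by
        gcongr
        exact h1.2.2.1 y _ (hA.smul_mem (inv_nonneg.2 hρ.le) hw)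

theorem norm_fInf_le (hA : S.ACone) (h0 : S.H0) (h1 : S.H1) (y : XX n) {w : UU m}
    (hw : w ∈ S.KA) : ‖S.fInf y w‖ ≤ 2 * S.M * (1 + ‖y‖) :=
  le_of_tendsto (h1.tendsto_f y hw.1).norm <| eventually_of_mem (Ioc_mem_nhdsGT one_pos) fun _ hρ =>
    norm_pow_smul_f_inv_smul_le hA h0 y hw hρ

theorem coercive_le_lInf (hA : S.ACone) (h0 : S.H0) (h1 : S.H1) (y : XX n) {w : UU m}
    (hw : w ∈ S.A) : S.C₂ * ‖w‖ ^ S.q ≤ S.lInf y w := by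
  have hlim : Tendsto (fun ρ : ℝ => S.C₂ * ‖w‖ ^ S.q - S.C₁ * ρ ^ S.q) (𝓝[>] 0)
      (𝓝 (S.C₂ * ‖w‖ ^ S.q)) := by
    simpa using tendsto_const_nhds.sub ((tendsto_pow_nhdsGT_zero h0.q_ne_zero).const_mul S.C₁)
  exact le_of_tendsto_of_tendsto hlim (h1.tendsto_l y hw) <|
    eventually_mem_nhdsWithin.mono fun _ hρ => coercive_le_pow_mul_l_inv_smul hA h1 y hw hρ

theorem lInf_le (hA : S.ACone) (h0 : S.H0) (h1 : S.H1) (y : XX n) {w : UU m}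
    (hw : w ∈ S.A) : S.lInf y w ≤ S.MR (‖y‖ + 1) * ‖w‖ ^ S.q := by
  have hlim : Tendsto (fun ρ : ℝ => S.MR (‖y‖ + 1) * (ρ ^ S.q + ‖w‖ ^ S.q)) (𝓝[>] 0)
      (𝓝 (S.MR (‖y‖ + 1) * ‖w‖ ^ S.q)) := by
    simpa using ((tendsto_pow_nhdsGT_zero h0.q_ne_zero).add_const _).const_mul (S.MR (‖y‖ + 1))
  exact le_of_tendsto_of_tendsto (h1.tendsto_l y hw) hlim <|
    eventually_mem_nhdsWithin.mono fun _ hρ => pow_mul_l_inv_smul_le hA h0 y hw hρ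

theorem norm_fbar_le (hA : S.ACone) (h0 : S.H0) (h1 : S.H1) (y : XX n) {w₀ : ℝ}
    (hw₀ : w₀ ∈ Icc 0 1) {w : UU m} (hw : w ∈ S.KA) :
    ‖S.fbar y w₀ w‖ ≤ 2 * S.M * (1 + ‖y‖) := by
  rcases hw₀.1.eq_or_lt with rfl | hpos
  · rw [fbar, if_pos rfl]
    exact norm_fInf_le hA h0 h1 y hw
  · rw [fbar, if_neg hpos.ne']
    exact norm_pow_smul_f_inv_smul_le hA h0 y hw ⟨hpos, hw₀.2⟩

theorem coercive_le_lbar (hA : S.ACone) (h0 : S.H0) (h1 : S.H1) (y : XX n) {w₀ : ℝ}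
    (hw₀ : 0 ≤ w₀) {w : UU m} (hw : w ∈ S.A) :
    S.C₂ * ‖w‖ ^ S.q - S.C₁ * w₀ ^ S.q ≤ S.lbar y w₀ w := by
  rcases hw₀.eq_or_lt with rfl | hpos
  · rw [lbar, if_pos rfl, zero_pow h0.q_ne_zero, mul_zero, sub_zero]
    exact coercive_le_lInf hA h0 h1 y hw
  · rw [lbar, if_neg hpos.ne']
    exact coercive_le_pow_mul_l_inv_smul hA h1 y hw hpos

theorem mul_pow_le_lbar (hA : S.ACone) (h0 : S.H0) (h1 : S.H1) {y : XX n} {c : ℝ}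
    (hly : ∀ a ∈ S.A, c ≤ S.l y a) {w₀ : ℝ} (hw₀ : 0 ≤ w₀) {w : UU m} (hw : w ∈ S.A) :
    c * w₀ ^ S.q ≤ S.lbar y w₀ w := by
  rcases hw₀.eq_or_lt with rfl | hpos
  · rw [lbar, if_pos rfl, zero_pow h0.q_ne_zero, mul_zero]
    exact (mul_nonneg h1.2.1.le (pow_nonneg (norm_nonneg w) _)).trans
      (coercive_le_lInf hA h0 h1 y hw)
  · rw [lbar, if_neg hpos.ne', mul_comm]
    exact mul_le_mul_of_nonneg_left (hly _ (hA.smul_mem (inv_nonneg.2 hpos.le) hw))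
      (pow_nonneg hpos.le _)

theorem lbar_le (hA : S.ACone) (h0 : S.H0) (h1 : S.H1) (y : XX n) {w₀ : ℝ} (hw₀ : 0 ≤ w₀)
    {w : UU m} (hw : w ∈ S.A) :
    S.lbar y w₀ w ≤ S.MR (‖y‖ + 1) * (w₀ ^ S.q + ‖w‖ ^ S.q) := by
  rcases hw₀.eq_or_lt with rfl | hpos
  · rw [lbar, if_pos rfl, zero_pow h0.q_ne_zero, zero_add]
    exact lInf_le hA h0 h1 y hw
  · rw [lbar, if_neg hpos.ne']
    exact pow_mul_l_inv_smul_le hA h0 y hw hpos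

/-- The bound balances the two lower bounds `c θ` and `C₂ (1 - θ) - C₁ θ` on `l̄`,
where `θ = w₀ ^ q`. -/
theorem le_lbar_w0of (hA : S.ACone) (h0 : S.H0) (h1 : S.H1) {y : XX n} {c : ℝ} (hc : 0 ≤ c)
    (hly : ∀ a ∈ S.A, c ≤ S.l y a) {w : UU m} (hw : w ∈ S.KA) :
    c * S.C₂ / (c + S.C₁ + S.C₂) ≤ S.lbar y (S.w0of w) w := by
  have hC₁ : 0 ≤ S.C₁ := h1.1
  have hC₂ : 0 < S.C₂ := h1.2.1
  have hw₀ := (w0of_mem_Icc (S := S) hw.2).1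
  have hlin := mul_pow_le_lbar hA h0 h1 hly hw₀ hw.1
  have hcoer := coercive_le_lbar hA h0 h1 y hw₀ hw.1
  have hwq : ‖w‖ ^ S.q = 1 - S.w0of w ^ S.q := by rw [w0of_pow h0.q_ne_zero hw.2]; ring
  rw [hwq] at hcoer
  have hD : 0 < c + S.C₁ + S.C₂ := by linarith
  rw [div_le_iff₀ hD]
  rcases le_total S.C₂ (S.w0of w ^ S.q * (c + S.C₁ + S.C₂)) with h | h
  · linarith [mul_le_mul_of_nonneg_left h hc, mul_le_mul_of_nonneg_right hlin hD.le]
  · linarith [mul_le_mul_of_nonneg_right hcoer hD.le,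
      mul_le_mul_of_nonneg_left h (add_nonneg hC₁ hC₂.le)]

theorem norm_fbarr_le (hA : S.ACone) (h0 : S.H0) (h1 : S.H1) (y : XX n) {ν : Measure (UU m)}
    [IsProbabilityMeasure ν] (hν : ν S.KAᶜ = 0) :
    ‖S.fbarr y ν‖ ≤ 2 * S.M * (1 + ‖y‖) := by
  simpa [fbarr] using norm_integral_le_of_norm_le_const (μ := ν) <| (ae_iff.2 hν).mono fun w hw =>
    norm_fbar_le hA h0 h1 y (w0of_mem_Icc hw.2) hw

theorem aestronglyMeasurable_lbar_w0of (hA : S.ACone) (h0 : S.H0) (h1 : S.H1) (y : XX n)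
    (ν : Measure (UU m)) :
    AEStronglyMeasurable (fun w => S.lbar y (S.w0of w) w) (ν.restrict S.KA) := by
  have hw₀ := continuous_w0of (S := S) h0.q_ne_zero
  set Z := {w : UU m | S.w0of w = 0}
  have hZ : IsClosed Z := isClosed_eq hw₀ continuous_const
  rw [← inter_union_compl S.KA Z, aestronglyMeasurable_union_iff]
  constructor
  · refine ContinuousOn.aestronglyMeasurable ?_ (hA.isClosed_KA.inter hZ).measurableSet
    refine ContinuousOn.congr ?_ fun w hw => if_pos hw.2
    exact h1.2.2.2.2.1.comp (continuous_const.prodMk continuous_id).continuousOn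
      fun w hw => ⟨mem_univ _, hw.1.1⟩
  · refine ContinuousOn.aestronglyMeasurable ?_
      (hA.isClosed_KA.measurableSet.inter hZ.measurableSet.compl)
    refine ContinuousOn.congr ?_ fun w hw => if_neg hw.2
    refine (hw₀.pow S.q).continuousOn.mul <| h0.2.2.2.1.comp
      (continuous_const.continuousOn.prodMk ((hw₀.continuousOn.inv₀ fun w hw => hw.2).smul
        continuousOn_id)) fun w hw => ⟨mem_univ _, ?_⟩
    exact hA.smul_mem (inv_nonneg.2 (w0of_mem_Icc hw.1.2).1) hw.1.1

theorem integrable_lbar_w0of (hA : S.ACone) (h0 : S.H0) (h1 : S.H1) (y : XX n)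
    {ν : Measure (UU m)} [IsFiniteMeasure ν] (hν : ν S.KAᶜ = 0) :
    Integrable (fun w => S.lbar y (S.w0of w) w) ν := by
  have hKA : ∀ᵐ w ∂ν, w ∈ S.KA := ae_iff.2 hν
  have hmeas := aestronglyMeasurable_lbar_w0of hA h0 h1 y ν
  rw [Measure.restrict_eq_self_of_ae_mem hKA] at hmeas
  refine Integrable.mono' (integrable_const (S.MR (‖y‖ + 1))) hmeas (hKA.mono fun w hw => ?_)
  have hw₀ := w0of_mem_Icc (S := S) hw.2
  have hnonneg := mul_pow_le_lbar hA h0 h1 (fun a ha => (h0.l_nonneg_and_le y ha).1) hw₀.1 hw.1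
  have hle := lbar_le hA h0 h1 y hw₀.1 hw.1
  rw [w0of_pow h0.q_ne_zero hw.2, sub_add_cancel, mul_one] at hle
  rw [zero_mul] at hnonneg
  rwa [Real.norm_of_nonneg hnonneg]

theorem le_lbarr (hA : S.ACone) (h0 : S.H0) (h1 : S.H1) {y : XX n} {c : ℝ} (hc : 0 ≤ c)
    (hly : ∀ a ∈ S.A, c ≤ S.l y a) {ν : Measure (UU m)} [IsProbabilityMeasure ν]
    (hν : ν S.KAᶜ = 0) :
    c * S.C₂ / (c + S.C₁ + S.C₂) ≤ S.lbarr y ν := by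
  calc c * S.C₂ / (c + S.C₁ + S.C₂) = ∫ _, c * S.C₂ / (c + S.C₁ + S.C₂) ∂ν := by simp
    _ ≤ S.lbarr y ν := integral_mono_ae (integrable_const _)
        (integrable_lbar_w0of hA h0 h1 y hν)
        ((ae_iff.2 hν).mono fun w hw => le_lbar_w0of hA h0 h1 hc hly hw)

theorem volume_setOf_le_norm_rtraj_ne_top (hA : S.ACone) (h0 : S.H0) (h1 : S.H1) {c R : ℝ}
    (hc : 0 < c) (hl : ∀ x : XX n, R ≤ ‖x‖ → ∀ a ∈ S.A, c ≤ S.l x a) {x : XX n}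
    {μ : ℝ → Measure (UU m)} (hμ : S.RAdmissible μ) (hg : ContinuousOn (S.rtraj x μ) (Ici 0))
    (hcost : S.rInfCost x μ ≠ ⊤) :
    volume {s ∈ Ioi 0 | R ≤ ‖S.rtraj x μ s‖} ≠ ⊤ := by
  set far := {s ∈ Ioi (0 : ℝ) | R ≤ ‖S.rtraj x μ s‖}
  have hfar : MeasurableSet far := by
    have := (measurableSet_Ioi (a := (0 : ℝ))).inter
      (hg.norm.preimage_isClosed_of_isClosed isClosed_Ici (isClosed_Ici (a := R))).measurableSet
    rwa [← inter_assoc, inter_eq_left.2 Ioi_subset_Ici_self] at this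
  set c' := c * S.C₂ / (c + S.C₁ + S.C₂)
  have hc' : 0 < c' := div_pos (mul_pos hc h1.2.1) (by linarith [h1.1, h1.2.1])
  have hbound : ENNReal.ofReal c' * volume far ≤ S.rInfCost x μ := by
    calc ENNReal.ofReal c' * volume far = ∫⁻ _ in far, ENNReal.ofReal c' :=
          (setLIntegral_const _ _).symm
      _ ≤ ∫⁻ s in far, ENNReal.ofReal (S.lbarr (S.rtraj x μ s) (μ s)) :=
          setLIntegral_mono' hfar fun s hs =>
            have := hμ.1 s
            ENNReal.ofReal_le_ofReal (le_lbarr hA h0 h1 hc.le (hl _ hs.2) (hμ.2.1 s))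
      _ ≤ S.rInfCost x μ := lintegral_mono_set fun s hs => hs.1
  exact fun htop => hcost (top_le_iff.1 (by
    simpa [htop, ENNReal.mul_top (ENNReal.ofReal_pos.2 hc').ne'] using hbound))

end Sys

theorem stmt_14_general {n m : ℕ} (S : Sys n m) (hS : S.Setup)
    (hl : ∃ c > (0:ℝ), ∃ R : ℝ, ∀ x : XX n, R ≤ ‖x‖ → ∀ a ∈ S.A, c ≤ S.l x a) :
    ∀ x : XX n, S.rInfVal x < ⊤ →
      ∀ μ, S.RAdmissible μ → S.rInfCost x μ = S.rInfVal x →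
        ∃ B : ℝ, ∀ s ≥ (0:ℝ), ‖S.rtraj x μ s‖ ≤ B := by
  obtain ⟨hA, h0, h1, -, -, hrtraj⟩ := hS
  obtain ⟨c, hc, R, hl⟩ := hl
  intro x hV μ hμ hopt
  obtain ⟨hcont, hinit, hint⟩ := (hrtraj x μ hμ).1
  refine exists_norm_le_of_volume_setOf_le_norm_ne_top hcont (fun t ht => ?_)
    (fun s _ => have := hμ.1 s; norm_fbarr_le hA h0 h1 _ (hμ.2.1 s))
    (volume_setOf_le_norm_rtraj_ne_top hA h0 h1 hc hl hμ hcont (hopt ▸ hV).ne)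
  rw [hinit]
  exact hint t ht

/-- if `liminf_{|x|→∞} inf_{a∈A} l(x,a) > 0` then every optimal relaxed
trajectory (for a point of finite relaxed value) is bounded. -/
theorem stmt_14 {n m : ℕ} (hn : 1 ≤ n) (hm : 1 ≤ m) (S : Sys n m) (hS : S.Setup)
    (hl : ∃ c > (0:ℝ), ∃ R : ℝ, ∀ x : XX n, R ≤ ‖x‖ → ∀ a ∈ S.A, c ≤ S.l x a) :
    ∀ x : XX n, S.rInfVal x < ⊤ →
      ∀ μ, S.RAdmissible μ → S.rInfCost x μ = S.rInfVal x →
        ∃ B : ℝ, ∀ s ≥ (0:ℝ), ‖S.rtraj x μ s‖ ≤ B :=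
  stmt_14_general S hS hl
end
end
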